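/- The images of the polynomials 1, v, t, v², v·t, t², v²·t form a basis of the quotient ring ℂ[u,v,t]/(u, 3v² + t³, v·t²) as a vector space over ℂ; in particular, this quotient has ℂ-dimension 7 (the Milnor number of an E₇ singularity). -/

import Mathlib

open MvPolynomial

noncomputable section E7Aux

abbrev R3 : Type := MvPolynomial (Fin 3) ℂ

def e7m : Fin 7 → R3 :=
  ![1, X 1, X 2, (X 1) ^ 2, X 1 * X 2, (X 2) ^ 2, (X 1) ^ 2 * X 2]

def e7e : Fin 7 → (Fin 3 →₀ ℕ)
  | ⟨0,_⟩ => 0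
  | ⟨1,_⟩ => Finsupp.single 1 1
  | ⟨2,_⟩ => Finsupp.single 2 1
  | ⟨3,_⟩ => Finsupp.single 1 2
  | ⟨4,_⟩ => Finsupp.single 1 1 + Finsupp.single 2 1
  | ⟨5,_⟩ => Finsupp.single 2 2
  | ⟨6,_⟩ => Finsupp.single 1 2 + Finsupp.single 2 1

def e7e' : Fin 7 → (Fin 3 →₀ ℕ)
  | ⟨3,_⟩ => Finsupp.single 2 3
  | ⟨6,_⟩ => Finsupp.single 2 4
  | _ => 0

def e7c : Fin 7 → ℂ
  | ⟨3,_⟩ => 3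
  | ⟨6,_⟩ => 3
  | _ => 0

@[simp] lemma e7e'_0 : e7e' 0 = 0 := rfl
@[simp] lemma e7e'_1 : e7e' 1 = 0 := rfl
@[simp] lemma e7e'_2 : e7e' 2 = 0 := rfl
@[simp] lemma e7e'_3 : e7e' 3 = Finsupp.single 2 3 := rfl
@[simp] lemma e7e'_4 : e7e' 4 = 0 := rfl
@[simp] lemma e7e'_5 : e7e' 5 = 0 := rfl
@[simp] lemma e7e'_6 : e7e' 6 = Finsupp.single 2 4 := rfl
@[simp] lemma e7c_0 : e7c 0 = 0 := rfl
@[simp] lemma e7c_1 : e7c 1 = 0 := rfl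
@[simp] lemma e7c_2 : e7c 2 = 0 := rfl
@[simp] lemma e7c_3 : e7c 3 = 3 := rfl
@[simp] lemma e7c_4 : e7c 4 = 0 := rfl
@[simp] lemma e7c_5 : e7c 5 = 0 := rfl
@[simp] lemma e7c_6 : e7c 6 = 3 := rfl

lemma e7m_eq_monomial : ∀ j, e7m j = monomial (e7e j) 1 := by
  intro j
  fin_cases j
  · show (1 : R3) = _ ; simp [e7e, monomial_zero', C_1]
  · show X _ = _ ; simp [e7e, X]
  · show X _ = _ ; simp [e7e, X]
  · show (X _ : R3) ^ 2 = _ ; simp [e7e, X_pow_eq_monomial]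
  · show (X 1 : R3) * X 2 = _ ; simp [e7e, X, monomial_mul]
  · show (X _ : R3) ^ 2 = _ ; simp [e7e, X_pow_eq_monomial]
  · show (X 1 : R3) ^ 2 * X 2 = _ ;
    rw [X_pow_eq_monomial] ; simp [e7e, X, monomial_mul]

def L7 : R3 →ₗ[ℂ] (Fin 7 → ℂ) where
  toFun p := fun k => coeff (e7e k) p - e7c k * coeff (e7e' k) p
  map_add' p q := by funext k; simp [coeff_add]; ring
  map_smul' a p := by funext k; simp [coeff_smul, smul_eq_mul]; ring

lemma L7_apply (p : R3) (k : Fin 7) :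
    L7 p k = coeff (e7e k) p - e7c k * coeff (e7e' k) p := rfl

lemma L7_mono (j k : Fin 7) : L7 (e7m j) k = if j = k then 1 else 0 := by
  rw [e7m_eq_monomial, L7_apply]
  fin_cases j <;> fin_cases k <;>
    simp [e7e, coeff_monomial, coeff_one, DFunLike.ext_iff, Fin.forall_fin_succ,
      Finsupp.single_apply, Finsupp.add_apply]

def I7 : Ideal R3 :=
  Ideal.span ({X 0, (3 : ℂ) • (X 1) ^ 2 + (X 2) ^ 3, X 1 * (X 2) ^ 2} : Set R3)

lemma L7_mul_X0 (p : R3) : L7 (p * X 0) = 0 := by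
  funext k
  rw [L7_apply]
  fin_cases k <;>
    simp [coeff_mul_X', e7e, Finsupp.mem_support_iff,
      Finsupp.single_apply, Finsupp.add_apply]

lemma L7_mul_g3 (p : R3) : L7 (p * (X 1 * (X 2) ^ 2)) = 0 := by
  have h : p * (X 1 * (X 2) ^ 2) =
      p * monomial (Finsupp.single 1 1) 1 * monomial (Finsupp.single 2 2) 1 := by
    rw [X_pow_eq_monomial, X]; ring
  funext k
  rw [L7_apply, h]
  fin_cases k <;>
    simp [coeff_mul_monomial', Finsupp.single_le_iff, Finsupp.tsub_apply,
      Finsupp.single_apply, Finsupp.add_apply, e7e]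

lemma L7_mul_g2 (p : R3) : L7 (p * ((3 : ℂ) • (X 1) ^ 2 + (X 2) ^ 3)) = 0 := by
  have h : p * ((3 : ℂ) • (X 1) ^ 2 + (X 2) ^ 3) =
      C 3 * (p * monomial (Finsupp.single 1 2) 1) + p * monomial (Finsupp.single 2 3) 1 := by
    rw [smul_eq_C_mul, X_pow_eq_monomial, X_pow_eq_monomial]; ring
  funext k
  rw [L7_apply, h]
  fin_cases k <;>
    simp [coeff_mul_monomial', coeff_add, coeff_C_mul, Finsupp.single_le_iff,
      Finsupp.tsub_apply, Finsupp.single_apply, Finsupp.add_apply, e7e,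
      tsub_self, add_tsub_cancel_left,
      show (Finsupp.single 2 4 - Finsupp.single 2 3 : Fin 3 →₀ ℕ) = Finsupp.single 2 1 from by
        rw [← Finsupp.single_tsub]]

lemma L7_vanish : ∀ z ∈ I7, L7 z = 0 := by
  intro z hz
  rw [I7, show ({X 0, (3 : ℂ) • (X 1) ^ 2 + (X 2) ^ 3, X 1 * (X 2) ^ 2} : Set R3) =
    insert (X 0) (insert ((3 : ℂ) • (X 1) ^ 2 + (X 2) ^ 3) {X 1 * (X 2) ^ 2}) from rfl,
    Ideal.mem_span_insert] at hz
  obtain ⟨p, w, hw, rfl⟩ := hz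
  rw [Ideal.mem_span_insert] at hw
  obtain ⟨q, w', hw', rfl⟩ := hw
  rw [Ideal.mem_span_singleton] at hw'
  obtain ⟨r, rfl⟩ := hw'
  rw [map_add, map_add, L7_mul_X0, L7_mul_g2, mul_comm, L7_mul_g3]
  simp

lemma hv3 : (X 1 : R3) ^ 3 ∈ I7 := by
  have h2 : ((3 : ℂ) • (X 1) ^ 2 + (X 2) ^ 3 : R3) ∈ I7 :=
    Ideal.subset_span (by simp)
  have h3 : (X 1 * (X 2) ^ 2 : R3) ∈ I7 := Ideal.subset_span (by simp)
  have key : (C 3 : R3) * (X 1) ^ 3 =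
      X 1 * ((3 : ℂ) • (X 1) ^ 2 + (X 2) ^ 3) - X 2 * (X 1 * (X 2) ^ 2) := by
    rw [smul_eq_C_mul]; ring
  have hm : (C 3 : R3) * (X 1) ^ 3 ∈ I7 :=
    key ▸ sub_mem (Ideal.mul_mem_left _ _ h2) (Ideal.mul_mem_left _ _ h3)
  have hx : (X 1 : R3) ^ 3 = C (1/3 : ℂ) * ((C 3 : R3) * (X 1) ^ 3) := by
    rw [← mul_assoc, ← C_mul]; norm_num
  rw [hx]
  exact Ideal.mul_mem_left _ _ hm

lemma hx0 : (X 0 : R3) ∈ I7 := Ideal.subset_span (by simp)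

def W7 : Submodule ℂ (R3 ⧸ I7) :=
  Submodule.span ℂ (Set.range fun j => Ideal.Quotient.mkₐ ℂ I7 (e7m j))

lemma memW_of_memI {z : R3} (h : z ∈ I7) : Ideal.Quotient.mkₐ ℂ I7 z ∈ W7 := by
  rw [Ideal.Quotient.mkₐ_eq_mk, Ideal.Quotient.eq_zero_iff_mem.mpr h]
  exact zero_mem _

lemma memW_basis (j : Fin 7) {z : R3} (h : e7m j = z) :
    Ideal.Quotient.mkₐ ℂ I7 z ∈ W7 :=
  h ▸ Submodule.subset_span (Set.mem_range_self j)

lemma hstep (i : Fin 3) (j : Fin 7) :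
    Ideal.Quotient.mkₐ ℂ I7 (e7m j * X i) ∈ W7 := by
  fin_cases i
  · exact memW_of_memI (Ideal.mul_mem_left _ _ hx0)
  · -- multiply by v = X 1
    fin_cases j
    · exact memW_basis 1 (by show (X 1 : R3) = 1 * X 1; ring)
    · exact memW_basis 3 (by show (X 1 : R3) ^ 2 = X 1 * X 1; ring)
    · exact memW_basis 4 (by show (X 1 : R3) * X 2 = X 2 * X 1; ring)
    · exact memW_of_memI (show (X 1 : R3) ^ 2 * X 1 ∈ I7 by
        have h : ((X 1 : R3) ^ 2 * X 1) = (X 1) ^ 3 := by ring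
        rw [h]; exact hv3)
    · exact memW_basis 6 (by show (X 1 : R3) ^ 2 * X 2 = X 1 * X 2 * X 1; ring)
    · exact memW_of_memI (show (X 2 : R3) ^ 2 * X 1 ∈ I7 by
        have h : ((X 2 : R3) ^ 2 * X 1) = X 1 * (X 2) ^ 2 := by ring
        rw [h]; exact Ideal.subset_span (by simp))
    · exact memW_of_memI (show (X 1 : R3) ^ 2 * X 2 * X 1 ∈ I7 by
        have h : ((X 1 : R3) ^ 2 * X 2 * X 1) = X 2 * (X 1) ^ 3 := by ring
        rw [h]; exact Ideal.mul_mem_left _ _ hv3)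
  · -- multiply by t = X 2
    fin_cases j
    · exact memW_basis 2 (by show (X 2 : R3) = 1 * X 2; ring)
    · exact memW_basis 4 (by show (X 1 : R3) * X 2 = X 1 * X 2; ring)
    · exact memW_basis 5 (by show (X 2 : R3) ^ 2 = X 2 * X 2; ring)
    · exact memW_basis 6 (by show (X 1 : R3) ^ 2 * X 2 = X 1 ^ 2 * X 2; ring)
    · exact memW_of_memI (show (X 1 : R3) * X 2 * X 2 ∈ I7 by
        have h : ((X 1 : R3) * X 2 * X 2) = X 1 * (X 2) ^ 2 := by ring
        rw [h]; exact Ideal.subset_span (by simp))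
    · -- t² * t = t³ = g2 - 3 v²
      have hkey : ((X 2 : R3) ^ 2 * X 2) =
          ((3 : ℂ) • (X 1) ^ 2 + (X 2) ^ 3) + (-3 : ℂ) • e7m 3 := by
        show _ = _ + (-3 : ℂ) • ((X 1 : R3) ^ 2)
        rw [smul_eq_C_mul, smul_eq_C_mul, map_neg]; ring
      show Ideal.Quotient.mkₐ ℂ I7 ((X 2 : R3) ^ 2 * X 2) ∈ W7
      rw [hkey, map_add, map_smul]
      exact add_mem
        (memW_of_memI (Ideal.subset_span (by simp)))
        (Submodule.smul_mem _ _ (Submodule.subset_span (Set.mem_range_self 3)))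
    · exact memW_of_memI (show (X 1 : R3) ^ 2 * X 2 * X 2 ∈ I7 by
        have h : ((X 1 : R3) ^ 2 * X 2 * X 2) = (X 1) * (X 1 * (X 2) ^ 2) := by ring
        rw [h]; exact Ideal.mul_mem_left _ _ (Ideal.subset_span (by simp)))

lemma W7_top (p : R3) : Ideal.Quotient.mkₐ ℂ I7 p ∈ W7 := by
  induction p using MvPolynomial.induction_on with
  | C a =>
    have h : (C a : R3) = a • 1 := by rw [smul_eq_C_mul, mul_one]
    rw [h, map_smul]
    exact Submodule.smul_mem _ _ (memW_basis 0 rfl)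
  | add p q hp hq => rw [map_add]; exact add_mem hp hq
  | mul_X p n hp =>
    rw [map_mul]
    have key : ∀ x ∈ W7, x * Ideal.Quotient.mkₐ ℂ I7 (X n) ∈ W7 := by
      intro x hx
      induction hx using Submodule.span_induction with
      | mem y hy =>
        obtain ⟨j, rfl⟩ := hy
        rw [← map_mul]
        exact hstep n j
      | zero => rw [zero_mul]; exact zero_mem _
      | add a b _ _ ha hb => rw [add_mul]; exact add_mem ha hb
      | smul a x _ hx => rw [smul_mul_assoc]; exact Submodule.smul_mem _ _ hx
    exact key _ hp

lemma hli7 : LinearIndependent ℂ (fun j : Fin 7 => Ideal.Quotient.mkₐ ℂ I7 (e7m j)) := by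
  refine Fintype.linearIndependent_iff.mpr ?_
  intro g hg j
  have h1 : Ideal.Quotient.mkₐ ℂ I7 (∑ k, g k • e7m k) = 0 := by
    rw [map_sum]; simpa [map_smul] using hg
  have h2 : (∑ k, g k • e7m k) ∈ I7 := by
    rwa [Ideal.Quotient.mkₐ_eq_mk, Ideal.Quotient.eq_zero_iff_mem] at h1
  have h3 := congrFun (L7_vanish _ h2) j
  rw [map_sum] at h3
  simpa [L7_mono, Finset.sum_apply, Finset.sum_ite_eq] using h3

lemma span7 :
    ⊤ ≤ Submodule.span ℂ (Set.range fun j : Fin 7 => Ideal.Quotient.mkₐ ℂ I7 (e7m j)) := by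
  rintro x -
  obtain ⟨p, rfl⟩ := Ideal.Quotient.mkₐ_surjective ℂ I7 x
  exact W7_top p

def B7 : Module.Basis (Fin 7) ℂ (R3 ⧸ I7) := Module.Basis.mk hli7 span7

lemma B7_apply (k : Fin 7) : B7 k = Ideal.Quotient.mkₐ ℂ I7 (e7m k) :=
  Module.Basis.mk_apply hli7 span7 k

end E7Aux

/-- The images of `1, v, t, v², v·t, t², v²·t` form a ℂ-basis of the quotient
`ℂ[u,v,t]/(u, 3v² + t³, v·t²)`; in particular this quotient has ℂ-dimension `7`
(the Milnor number of an `E₇` singularity). -/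
theorem e7_milnor_basis :
    (∃ B : Module.Basis (Fin 7) ℂ
        (MvPolynomial (Fin 3) ℂ ⧸
          Ideal.span ({X 0, (3 : ℂ) • (X 1) ^ 2 + (X 2) ^ 3, X 1 * (X 2) ^ 2} :
            Set (MvPolynomial (Fin 3) ℂ))),
      ∀ k : Fin 7,
        B k = Ideal.Quotient.mk _
          ((![1, X 1, X 2, (X 1) ^ 2, X 1 * X 2, (X 2) ^ 2, (X 1) ^ 2 * X 2] :
            Fin 7 → MvPolynomial (Fin 3) ℂ) k)) ∧
    Module.finrank ℂ
      (MvPolynomial (Fin 3) ℂ ⧸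
        Ideal.span ({X 0, (3 : ℂ) • (X 1) ^ 2 + (X 2) ^ 3, X 1 * (X 2) ^ 2} :
          Set (MvPolynomial (Fin 3) ℂ))) = 7 := by
  constructor
  · exact ⟨B7, fun k => (B7_apply k).trans rfl⟩
  · rw [show (7 : ℕ) = Fintype.card (Fin 7) from (Fintype.card_fin 7).symm]
    exact Module.finrank_eq_card_basis B7
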